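/- arXiv:1907.13110 — 3 statements merged into one kernel-verified Lean document; each statement's English description precedes it below -/
import Mathlib

section
/- Let c ≥ 2, ñ ≥ 3, n = cñ, and for c₀ ∈ {1,…,c−1} let V_{c₀} = B₁ ∪ … ∪ B_{c₀} be the set of vertices of the first c₀ blocks of the c-barbell graph. Then the subset conductances of the uniform and effective-resistance gossiping matrices satisfy Φ_{V_{c₀}}(W̄_{P^u}) = 1/(c₀ · c · ñ³) and Φ_{V_{c₀}}(W̄_{P^r}) = 1/(2·c₀·ñ·(cñ − 1)), where Φ_S(W) = (1/|S|)·Σ_{i∈S, j∉S} W_{ij}. -/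
open Matrix BigOperators Finset

/-- The `c`-barbell graph on `c*tn` vertices (0-indexed): for each `k = 0,…,c−1` the block
`B_k = {k*tn,…,(k+1)*tn−1}` induces a complete graph (two vertices are in the same block iff
their values have the same quotient by `tn`), and for each `k = 1,…,c−1` there is a bridge edge
between vertex `k*tn − 1` and vertex `k*tn` (i.e. between consecutive vertices `i, i+1` with
`(i+1) % tn = 0`). -/
def cBarbell (c tn : ℕ) : SimpleGraph (Fin (c * tn)) where
  Adj i j := i ≠ j ∧ (i.val / tn = j.val / tn ∨
    (j.val = i.val + 1 ∧ (i.val + 1) % tn = 0) ∨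
    (i.val = j.val + 1 ∧ (j.val + 1) % tn = 0))
  symm := by
    constructor
    rintro i j ⟨hne, h⟩
    refine ⟨hne.symm, ?_⟩
    rcases h with h | h | h
    · exact Or.inl h.symm
    · exact Or.inr (Or.inr h)
    · exact Or.inr (Or.inl h)
  loopless := by constructor; rintro i ⟨hne, -⟩; exact hne rfl

instance (c tn : ℕ) : DecidableRel (cBarbell c tn).Adj := fun i j =>
  inferInstanceAs (Decidable (i ≠ j ∧ (i.val / tn = j.val / tn ∨
    (j.val = i.val + 1 ∧ (i.val + 1) % tn = 0) ∨
    (i.val = j.val + 1 ∧ (j.val + 1) % tn = 0))))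

/-- The uniform edge-activation probability matrix: `P^u_{ij} = 1/(n d_i)` on edges, `0` else. -/
noncomputable def probUnif {n : ℕ} (G : SimpleGraph (Fin n)) [DecidableRel G.Adj] :
    Matrix (Fin n) (Fin n) ℝ :=
  Matrix.of fun i j => if G.Adj i j then 1 / ((n : ℝ) * (G.degree i : ℝ)) else 0

/-- The uniform-gossiping matrix `W̄_{P^u} = I − D^u/2 + (P^u + (P^u)ᵀ)/2`, where
`D^u_{ii} = Σ_j (P^u_{ij} + P^u_{ji})`. -/
noncomputable def gossipUnif {n : ℕ} (G : SimpleGraph (Fin n)) [DecidableRel G.Adj] :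
    Matrix (Fin n) (Fin n) ℝ :=
  (1 : Matrix (Fin n) (Fin n) ℝ)
    - (1 / 2 : ℝ) • Matrix.diagonal (fun i => ∑ j, (probUnif G i j + probUnif G j i))
    + (1 / 2 : ℝ) • (probUnif G + (probUnif G)ᵀ)

/-- The effective-resistance edge-activation probabilities on the `c`-barbell graph with
`n = c*tn`: `1/(2(n−1))` on bridge edges, `1/(tn(n−1))` on edges within a block, `0` else. -/
noncomputable def probResCBarbell (c tn : ℕ) : Matrix (Fin (c * tn)) (Fin (c * tn)) ℝ :=
  Matrix.of fun i j =>
    if (cBarbell c tn).Adj i j then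
      (if i.val / tn = j.val / tn then 1 / ((tn : ℝ) * ((c : ℝ) * (tn : ℝ) - 1))
       else 1 / (2 * ((c : ℝ) * (tn : ℝ) - 1)))
    else 0

/-- The effective-resistance gossiping matrix `W̄_{P^r} = I − D^r/2 + P^r` of the `c`-barbell
graph, where `D^r_{ii} = 2 Σ_j P^r_{ij}`. -/
noncomputable def gossipResCBarbell (c tn : ℕ) : Matrix (Fin (c * tn)) (Fin (c * tn)) ℝ :=
  (1 : Matrix (Fin (c * tn)) (Fin (c * tn)) ℝ)
    - (1 / 2 : ℝ) • Matrix.diagonal (fun i => 2 * ∑ j, probResCBarbell c tn i j)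
    + probResCBarbell c tn

/-- The subset conductance `Φ_S(W) = (1/|S|) Σ_{i∈S, j∉S} W_{ij}`. -/
noncomputable def subsetConductance {n : ℕ} (W : Matrix (Fin n) (Fin n) ℝ)
    (S : Finset (Fin n)) : ℝ :=
  (∑ i ∈ S, ∑ j ∈ Sᶜ, W i j) / (S.card : ℝ)

/-!
Removing the bridge edge between vertices `c₀ñ − 1` and `c₀ñ` disconnects `V_{c₀}` from the rest
of the graph, and the off-diagonal entries of both gossiping matrices vanish off the edges, so the
cut sum of either matrix is its entry on that one bridge. Both endpoints of a bridge have degree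
`ñ` (`ñ − 1` neighbours in their block plus the bridge), which gives the uniform entry
`1/(cñ · ñ)`; the effective-resistance entry is the bridge weight `1/(2(cñ − 1))`. Dividing by
`|V_{c₀}| = c₀ñ` gives both values.
-/

lemma Finset.sum_sum_eq_single_of_mem {ι κ M : Type*} [AddCommMonoid M]
    {s : Finset ι} {t : Finset κ} {f : ι → κ → M} {a : ι} {b : κ} (ha : a ∈ s) (hb : b ∈ t)
    (h : ∀ i ∈ s, ∀ j ∈ t, (i, j) ≠ (a, b) → f i j = 0) :
    ∑ i ∈ s, ∑ j ∈ t, f i j = f a b := by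
  rw [← Finset.sum_product', Finset.sum_eq_single_of_mem (a, b) (mem_product.2 ⟨ha, hb⟩)]
  rintro ⟨i, j⟩ hij hne
  exact h i (mem_product.1 hij).1 j (mem_product.1 hij).2 hne

lemma Nat.div_ne_div_of_lt_of_le {i j k n : ℕ} (hi : i < k * n) (hj : k * n ≤ j) :
    i / n ≠ j / n := by
  have hn : 0 < n := Nat.pos_of_ne_zero (by rintro rfl; simp at hi)
  have hi' : i / n < k := (Nat.div_lt_iff_lt_mul hn).2 hi
  have hj' : k ≤ j / n := (Nat.le_div_iff_mul_le hn).2 hj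
  omega

lemma gossipUnif_apply_of_ne {n : ℕ} (G : SimpleGraph (Fin n)) [DecidableRel G.Adj]
    {i j : Fin n} (hij : i ≠ j) :
    gossipUnif G i j = (probUnif G i j + probUnif G j i) / 2 := by
  simp only [gossipUnif, Matrix.add_apply, Matrix.sub_apply, Matrix.smul_apply, one_apply_ne hij,
    diagonal_apply_ne _ hij, transpose_apply, smul_eq_mul]
  ring

lemma gossipUnif_apply_of_not_adj {n : ℕ} (G : SimpleGraph (Fin n)) [DecidableRel G.Adj]
    {i j : Fin n} (hij : i ≠ j) (hadj : ¬ G.Adj i j) : gossipUnif G i j = 0 := by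
  have hadj' : ¬ G.Adj j i := fun h => hadj h.symm
  simp [gossipUnif_apply_of_ne G hij, probUnif, hadj, hadj']

lemma gossipResCBarbell_apply_of_ne (c tn : ℕ) {i j : Fin (c * tn)} (hij : i ≠ j) :
    gossipResCBarbell c tn i j = probResCBarbell c tn i j := by
  simp [gossipResCBarbell, one_apply_ne hij, diagonal_apply_ne _ hij]

lemma gossipResCBarbell_apply_of_not_adj (c tn : ℕ) {i j : Fin (c * tn)} (hij : i ≠ j)
    (hadj : ¬ (cBarbell c tn).Adj i j) : gossipResCBarbell c tn i j = 0 := by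
  simp [gossipResCBarbell_apply_of_ne c tn hij, probResCBarbell, hadj]

namespace cBarbell

variable {c tn : ℕ}

lemma adj_iff_of_lt_of_le {k : ℕ} {i j : Fin (c * tn)} (hi : i.val < k * tn)
    (hj : k * tn ≤ j.val) :
    (cBarbell c tn).Adj i j ↔ i.val + 1 = k * tn ∧ j.val = k * tn := by
  constructor
  · rintro ⟨-, hblock | ⟨hij, -⟩ | ⟨hji, -⟩⟩
    · exact absurd hblock (Nat.div_ne_div_of_lt_of_le hi hj)
    · omega
    · omega
  · rintro ⟨hi', hj'⟩
    refine ⟨Fin.ne_of_val_ne (by omega), Or.inr (Or.inl ⟨by omega, ?_⟩)⟩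
    rw [hi', Nat.mul_mod_left]

lemma degree_of_add_one_eq_mul (htn : 2 ≤ tn) {k : ℕ} {u : Fin (c * tn)}
    (hu : u.val + 1 = k * tn) (hk : k * tn < c * tn) : (cBarbell c tn).degree u = tn := by
  have hK : tn ≤ k * tn :=
    Nat.le_mul_of_pos_left tn (Nat.pos_of_ne_zero (by rintro rfl; simp at hu))
  have hblock : ∀ m, m / tn = k - 1 ↔ k * tn - tn ≤ m ∧ m < k * tn := fun m => by
    rw [Nat.div_eq_iff (by omega), Nat.sub_one_mul]; omega
  have hneighbors : ((cBarbell c tn).neighborFinset u).map Fin.valEmbedding =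
      (Icc (k * tn - tn) (k * tn)).erase u.val := by
    ext m
    simp only [mem_map, SimpleGraph.mem_neighborFinset, Fin.valEmbedding_apply, mem_erase,
      mem_Icc]
    have hu' : u.val / tn = k - 1 := (hblock _).2 (by omega)
    constructor
    · rintro ⟨j, ⟨hne, hsame | ⟨hj, -⟩ | ⟨hj, -⟩⟩, rfl⟩
      · have := (hblock j.val).1 (hsame ▸ hu'); omega
      · omega
      · omega
    · rintro ⟨hne, hlo, hhi⟩
      refine ⟨⟨m, by omega⟩, ⟨Fin.ne_of_val_ne (Ne.symm hne), ?_⟩, rfl⟩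
      rcases Nat.lt_or_ge m (k * tn) with hm | hm
      · exact Or.inl (hu'.trans ((hblock m).2 ⟨hlo, hm⟩).symm)
      · exact Or.inr (Or.inl ⟨by simp only; omega, by rw [hu, Nat.mul_mod_left]⟩)
  rw [SimpleGraph.degree, ← card_map Fin.valEmbedding, hneighbors,
    card_erase_of_mem (mem_Icc.2 ⟨by omega, by omega⟩), Nat.card_Icc]
  omega

lemma degree_of_eq_mul (htn : 2 ≤ tn) {k : ℕ} {v : Fin (c * tn)} (hv : v.val = k * tn)
    (hk : 0 < k) : (cBarbell c tn).degree v = tn := by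
  have hK : tn ≤ k * tn := Nat.le_mul_of_pos_left tn hk
  have hKc : k * tn + tn ≤ c * tn := by
    rw [← Nat.succ_mul]
    exact Nat.mul_le_mul_right tn (Nat.lt_of_mul_lt_mul_right (hv ▸ v.isLt))
  have hblock : ∀ m, m / tn = k ↔ k * tn ≤ m ∧ m < k * tn + tn := fun m => by
    rw [Nat.div_eq_iff (by omega)]; omega
  have hneighbors : ((cBarbell c tn).neighborFinset v).map Fin.valEmbedding =
      (Icc (k * tn - 1) (k * tn + tn - 1)).erase v.val := by
    ext m
    simp only [mem_map, SimpleGraph.mem_neighborFinset, Fin.valEmbedding_apply, mem_erase,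
      mem_Icc]
    have hv' : v.val / tn = k := (hblock _).2 (by omega)
    constructor
    · rintro ⟨j, ⟨hne, hsame | ⟨hj, -⟩ | ⟨hj, -⟩⟩, rfl⟩
      · have := (hblock j.val).1 (hsame ▸ hv'); omega
      · omega
      · omega
    · rintro ⟨hne, hlo, hhi⟩
      refine ⟨⟨m, by omega⟩, ⟨Fin.ne_of_val_ne (Ne.symm hne), ?_⟩, rfl⟩
      rcases Nat.lt_or_ge m (k * tn) with hm | hm
      · exact Or.inr (Or.inr ⟨by simp only; omega, by
          simp only; rw [show m + 1 = k * tn by omega, Nat.mul_mod_left]⟩)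
      · exact Or.inl (hv'.trans ((hblock m).2 ⟨hm, by omega⟩).symm)
  rw [SimpleGraph.degree, ← card_map Fin.valEmbedding, hneighbors,
    card_erase_of_mem (mem_Icc.2 ⟨by omega, by omega⟩), Nat.card_Icc]
  omega

lemma sum_cut_eq_apply_bridge {W : Matrix (Fin (c * tn)) (Fin (c * tn)) ℝ}
    (hW : ∀ i j, i ≠ j → ¬ (cBarbell c tn).Adj i j → W i j = 0) {k : ℕ} {u v : Fin (c * tn)}
    (hu : u.val + 1 = k * tn) (hv : v.val = k * tn) :
    ∑ i ∈ univ.filter (fun i : Fin (c * tn) => i.val < k * tn),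
      ∑ j ∈ (univ.filter (fun i : Fin (c * tn) => i.val < k * tn))ᶜ, W i j = W u v := by
  refine Finset.sum_sum_eq_single_of_mem (by simp only [mem_filter, mem_univ, true_and]; omega)
    (by simp only [compl_filter, not_lt, mem_filter, mem_univ, true_and]; omega) ?_
  intro i hi j hj hne
  simp only [mem_filter, mem_univ, true_and, mem_compl, not_lt] at hi hj
  refine hW i j (Fin.ne_of_val_ne (by omega)) fun hadj => hne ?_
  obtain ⟨hi', hj'⟩ := (adj_iff_of_lt_of_le hi hj).1 hadj
  rw [Fin.ext (by omega : i.val = u.val), Fin.ext (by omega : j.val = v.val)]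

end cBarbell

theorem stmt11_general (c tn : ℕ) (htn : 3 ≤ tn)
    (c0 : ℕ) (hc0 : 1 ≤ c0) (hc0' : c0 ≤ c - 1)
    (V : Finset (Fin (c * tn))) (hV : V = Finset.univ.filter (fun i => i.val < c0 * tn)) :
    subsetConductance (gossipUnif (cBarbell c tn)) V =
      1 / ((c0 : ℝ) * (c : ℝ) * (tn : ℝ) ^ 3) ∧
    subsetConductance (gossipResCBarbell c tn) V =
      1 / (2 * (c0 : ℝ) * (tn : ℝ) * ((c : ℝ) * (tn : ℝ) - 1)) := by
  have hK : c0 * tn < c * tn := Nat.mul_lt_mul_of_pos_right (by omega) (by omega)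
  have hK0 : 0 < c0 * tn := Nat.mul_pos (by omega) (by omega)
  let u : Fin (c * tn) := ⟨c0 * tn - 1, by omega⟩
  let v : Fin (c * tn) := ⟨c0 * tn, hK⟩
  have hu : u.val + 1 = c0 * tn := Nat.sub_add_cancel hK0
  have hv : v.val = c0 * tn := rfl
  have huv : u ≠ v := Fin.ne_of_val_ne (by omega)
  have hadj : (cBarbell c tn).Adj u v :=
    (cBarbell.adj_iff_of_lt_of_le (by omega) le_rfl).2 ⟨hu, rfl⟩
  have hcard : (V.card : ℝ) = c0 * tn := by
    rw [hV, Fin.card_filter_val_lt, min_eq_right hK.le, Nat.cast_mul]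
  rw [subsetConductance, subsetConductance, hcard, hV,
    cBarbell.sum_cut_eq_apply_bridge (fun _ _ => gossipUnif_apply_of_not_adj _) hu hv,
    cBarbell.sum_cut_eq_apply_bridge (fun _ _ => gossipResCBarbell_apply_of_not_adj c tn) hu hv,
    gossipUnif_apply_of_ne _ huv, gossipResCBarbell_apply_of_ne c tn huv]
  constructor
  · simp only [probUnif, of_apply, if_pos hadj, if_pos hadj.symm,
      cBarbell.degree_of_add_one_eq_mul (by omega) hu hK,
      cBarbell.degree_of_eq_mul (by omega) hv (by omega : 0 < c0)]
    push_cast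
    field_simp
    ring
  · simp only [probResCBarbell, of_apply, if_pos hadj,
      if_neg (Nat.div_ne_div_of_lt_of_le (by omega : u.val < c0 * tn) hv.ge)]
    field_simp

/-- The subset conductances of the first `c₀` blocks `V_{c₀} = B₁ ∪ … ∪ B_{c₀}` of the
`c`-barbell graph: `Φ_{V_{c₀}}(W̄_{P^u}) = 1/(c₀ c tn³)` and
`Φ_{V_{c₀}}(W̄_{P^r}) = 1/(2 c₀ tn (c tn − 1))`. -/
theorem stmt11 (c tn : ℕ) (hc : 2 ≤ c) (htn : 3 ≤ tn)
    (c0 : ℕ) (hc0 : 1 ≤ c0) (hc0' : c0 ≤ c - 1)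
    (V : Finset (Fin (c * tn))) (hV : V = Finset.univ.filter (fun i => i.val < c0 * tn)) :
    subsetConductance (gossipUnif (cBarbell c tn)) V =
      1 / ((c0 : ℝ) * (c : ℝ) * (tn : ℝ) ^ 3) ∧
    subsetConductance (gossipResCBarbell c tn) V =
      1 / (2 * (c0 : ℝ) * (tn : ℝ) * ((c : ℝ) * (tn : ℝ) - 1)) :=
  stmt11_general c tn htn c0 hc0 hc0' V hV
end

section
/- Let c ≥ 2, ñ ≥ 3, n = cñ, and let W̄_{P^u} be the uniform-gossiping matrix of the c-barbell graph. Then: (a) for every bridge edge (i*, j*), [W̄_{P^u}]_{i*j*} = 1/(cñ²); (b) for every edge (i*, j) within a block with deg(i*) = ñ and deg(j) = ñ−1, [W̄_{P^u}]_{i*j} = (2ñ−1)/(2cñ²(ñ−1)); (c) for every edge (i,j) within a block with deg(i) = deg(j) = ñ−1, [W̄_{P^u}]_{ij} = 1/(cñ(ñ−1)). Moreover, for the effective-resistance gossiping matrix W̄_{P^r}: [W̄_{P^r}]_{ij} = 1/(2(cñ−1)) for every bridge edge (i,j) and [W̄_{P^r}]_{ij} = 1/(ñ(cñ−1)) for every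 edge (i,j) within a block. -/
open Matrix BigOperators Finset

/-- The standard basis vector `e i` of `ℝⁿ`. -/
def stdBasisVec {n : ℕ} (i : Fin n) : Fin n → ℝ := fun k => if k = i then 1 else 0

/-!
On an edge `ij` the uniform gossiping entry is `(1/(n d_i) + 1/(n d_j))/2`, so the first three
claims only need the degree `ñ` of a bridge endpoint.

Two solutions of `L v = e_i - e_j` differ by a vector that is constant along edges, so the
resistance `v_i - v_j` of an edge can be read off any explicit solution. For a bridge the
indicator of the vertices on its left side works (the bridge is the only edge it cuts), giving
`R = 1`. For an edge inside a block `B` take `(e_i - e_j)/ñ` on `B`, where the Laplacian acts as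
`ñ • id` on vectors summing to zero over the clique, and extend it outside `B` by its value at
the nearest endpoint of `B`; this gives `R = 2/ñ`.
-/

namespace SimpleGraph

variable {V : Type*} [Fintype V] [DecidableEq V] (G : SimpleGraph V) [DecidableRel G.Adj]

theorem lapMatrix_mulVec_apply_eq_sum_sub {R : Type*} [NonAssocRing R] (v : V) (x : V → R) :
    (G.lapMatrix R *ᵥ x) v = ∑ u ∈ G.neighborFinset v, (x v - x u) := by
  rw [lapMatrix_mulVec_apply, sum_sub_distrib, sum_const, card_neighborFinset_eq_degree,
    nsmul_eq_mul]

theorem sub_eq_sub_of_lapMatrix_mulVec_eq {x y : V → ℝ}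
    (h : G.lapMatrix ℝ *ᵥ x = G.lapMatrix ℝ *ᵥ y) {i j : V} (hij : G.Adj i j) :
    x i - x j = y i - y j := by
  have h0 : G.lapMatrix ℝ *ᵥ (x - y) = 0 := by rw [mulVec_sub, h, sub_self]
  have := (lapMatrix_mulVec_eq_zero_iff_forall_adj G).mp h0 i j hij
  simp only [Pi.sub_apply] at this
  linarith

end SimpleGraph

theorem gossipUnif_apply_of_adj {n : ℕ} (G : SimpleGraph (Fin n)) [DecidableRel G.Adj]
    {i j : Fin n} (hij : G.Adj i j) :
    gossipUnif G i j = (1 / ((n : ℝ) * G.degree i) + 1 / ((n : ℝ) * G.degree j)) / 2 := by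
  simp only [gossipUnif, Matrix.add_apply, Matrix.sub_apply, one_apply_ne hij.ne,
    Matrix.smul_apply, diagonal_apply_ne _ hij.ne, transpose_apply, probUnif, of_apply,
    if_pos hij, if_pos hij.symm, smul_eq_mul]
  ring

def barbellBlock (c tn q : ℕ) : Finset (Fin (c * tn)) := {u | u.val / tn = q}

theorem card_barbellBlock {c tn q : ℕ} (htn : 0 < tn) (hq : q < c) :
    #(barbellBlock c tn q) = tn := by
  have hmap : (barbellBlock c tn q).map Fin.valEmbedding = Ico (q * tn) (q * tn + tn) := by
    have hle : q * tn + tn ≤ c * tn := by nlinarith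
    ext m
    simp only [barbellBlock, mem_map, mem_filter, mem_univ, true_and, Fin.valEmbedding_apply,
      mem_Ico, Nat.div_eq_iff htn]
    constructor
    · rintro ⟨u, hu, rfl⟩
      omega
    · intro hm
      exact ⟨⟨m, by omega⟩, by simp only; omega, rfl⟩
  rw [← card_map Fin.valEmbedding, hmap, Nat.card_Ico]
  omega

namespace cBarbell

variable {c tn : ℕ}

theorem adj_of_bridge {i j : Fin (c * tn)} (hij : j.val = i.val + 1)
    (hmod : (i.val + 1) % tn = 0) : (cBarbell c tn).Adj i j :=
  ⟨fun h => by rw [h] at hij; omega, Or.inr (Or.inl ⟨hij, hmod⟩)⟩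

theorem eq_of_adj_of_div_ne (htn : 2 ≤ tn) {k u w : Fin (c * tn)} (hu : (cBarbell c tn).Adj k u)
    (hw : (cBarbell c tn).Adj k w) (hku : k.val / tn ≠ u.val / tn)
    (hkw : k.val / tn ≠ w.val / tn) : u = w := by
  have not_dvd_both : ∀ m : ℕ, tn ∣ m → ¬ tn ∣ m + 1 := fun m hm hm1 => by
    have := Nat.eq_one_of_dvd_one ((Nat.dvd_add_right hm).mp hm1)
    omega
  rcases hu.2.resolve_left hku with ⟨hu, hmu⟩ | ⟨hu, hmu⟩ <;>
    rcases hw.2.resolve_left hkw with ⟨hw, hmw⟩ | ⟨hw, hmw⟩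
  · exact Fin.ext (hu.trans hw.symm)
  · exact absurd (Nat.dvd_of_mod_eq_zero hmu) (not_dvd_both _ (hw ▸ Nat.dvd_of_mod_eq_zero hmw))
  · exact absurd (Nat.dvd_of_mod_eq_zero hmw) (not_dvd_both _ (hu ▸ Nat.dvd_of_mod_eq_zero hmu))
  · exact Fin.ext (by omega)

theorem degree_eq_of_adj_of_div_ne (htn : 2 ≤ tn) {k u : Fin (c * tn)}
    (h : (cBarbell c tn).Adj k u) (hne : k.val / tn ≠ u.val / tn) :
    (cBarbell c tn).degree k = tn := by
  have hneighbors : (cBarbell c tn).neighborFinset k =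
      insert u ((barbellBlock c tn (k.val / tn)).erase k) := by
    ext w
    simp only [SimpleGraph.mem_neighborFinset, mem_insert, mem_erase, barbellBlock, mem_filter,
      mem_univ, true_and]
    constructor
    · intro hw
      by_cases hkw : k.val / tn = w.val / tn
      · exact Or.inr ⟨hw.ne.symm, hkw.symm⟩
      · exact Or.inl (eq_of_adj_of_div_ne htn hw h hkw hne)
    · rintro (rfl | ⟨hwk, hkw⟩)
      · exact h
      · exact ⟨hwk.symm, Or.inl hkw.symm⟩
  have hk : k ∈ barbellBlock c tn (k.val / tn) := by simp [barbellBlock]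
  have hu : u ∉ (barbellBlock c tn (k.val / tn)).erase k := by
    simp [barbellBlock, Ne.symm hne]
  rw [SimpleGraph.degree, hneighbors, card_insert_of_notMem hu, card_erase_of_mem hk,
    card_barbellBlock (by omega) ((Nat.div_lt_iff_lt_mul (by omega)).mpr k.isLt)]
  omega

theorem eq_of_adj_of_le_of_lt {i k u : Fin (c * tn)} (hmod : (i.val + 1) % tn = 0)
    (h : (cBarbell c tn).Adj k u) (hk : k.val ≤ i.val) (hu : i.val < u.val) :
    k = i ∧ u.val = i.val + 1 := by
  rcases h.2 with hblock | ⟨hku, -⟩ | ⟨hku, -⟩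
  · have hsucc := Nat.succ_div_of_dvd (Nat.dvd_of_mod_eq_zero hmod)
    have := Nat.div_le_div_right (c := tn) hk
    have := Nat.div_le_div_right (c := tn) (show i.val + 1 ≤ u.val from hu)
    omega
  · exact ⟨Fin.ext (by omega), by omega⟩
  · omega

theorem lapMatrix_mulVec_indicator_le_of_bridge {i j : Fin (c * tn)} (hij : j.val = i.val + 1)
    (hmod : (i.val + 1) % tn = 0) :
    (cBarbell c tn).lapMatrix ℝ *ᵥ (fun k => if k.val ≤ i.val then 1 else 0) =
      stdBasisVec i - stdBasisVec j := by
  have hji : j ≠ i := fun h => by rw [h] at hij; omega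
  have hterm : ∀ k u, (cBarbell c tn).Adj k u →
      ((if k.val ≤ i.val then 1 else 0) - if u.val ≤ i.val then 1 else 0 : ℝ) =
        (if k = i then if u = j then 1 else 0 else 0) -
          (if k = j then if u = i then 1 else 0 else 0) := by
    intro k u h
    by_cases hk : k.val ≤ i.val <;> by_cases hu : u.val ≤ i.val
    · have hkj : k ≠ j := fun h => by rw [h] at hk; omega
      have huj : u ≠ j := fun h => by rw [h] at hu; omega
      simp [hk, hu, hkj, huj]
    · obtain ⟨rfl, hu'⟩ := eq_of_adj_of_le_of_lt hmod h hk (not_le.mp hu)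
      simp [hji.symm, Fin.ext (hu'.trans hij.symm), hij]
    · obtain ⟨rfl, hk'⟩ := eq_of_adj_of_le_of_lt hmod h.symm hu (not_le.mp hk)
      simp [hji, Fin.ext (hk'.trans hij.symm), hij]
    · have hki : k ≠ i := fun h => by rw [h] at hk; omega
      have hui : u ≠ i := fun h => by rw [h] at hu; omega
      simp [hk, hu, hki, hui]
  funext k
  rw [SimpleGraph.lapMatrix_mulVec_apply_eq_sum_sub,
    sum_congr rfl fun u hu => hterm k u ((SimpleGraph.mem_neighborFinset _ _ _).mp hu)]
  have hadj := adj_of_bridge hij hmod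
  by_cases hki : k = i
  · subst hki
    simp [stdBasisVec, hji.symm, hadj]
  · by_cases hkj : k = j
    · subst hkj
      simp [stdBasisVec, hji, hadj.symm]
    · simp [stdBasisVec, hki, hkj]

def clampToBlock (tn q m : ℕ) : ℕ := min (max m (q * tn)) (q * tn + tn - 1)

theorem clampToBlock_of_div_eq (htn : 0 < tn) {q m : ℕ} (hm : m / tn = q) :
    clampToBlock tn q m = m := by
  rw [Nat.div_eq_iff htn] at hm
  unfold clampToBlock
  omega

theorem clampToBlock_eq_of_adj (htn : 0 < tn) {q : ℕ} {k u : Fin (c * tn)}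
    (h : (cBarbell c tn).Adj k u) (hk : k.val / tn ≠ q) :
    clampToBlock tn q k = clampToBlock tn q u := by
  have below : ∀ m : ℕ, m / tn < q ↔ m < q * tn := fun m => Nat.div_lt_iff_lt_mul htn
  have above : ∀ m : ℕ, q < m / tn ↔ q * tn + tn ≤ m := fun m => by
    rw [Nat.lt_iff_add_one_le, Nat.le_div_iff_mul_le htn, add_mul, one_mul]
  unfold clampToBlock
  rcases Nat.lt_or_gt_of_ne hk with hlt | hgt
  · have hk' := (below k).mp hlt
    rcases h.2 with hblock | ⟨hku, -⟩ | ⟨hku, -⟩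
    · have := (below u).mp (hblock ▸ hlt)
      omega
    all_goals omega
  · have hk' := (above k).mp hgt
    rcases h.2 with hblock | ⟨hku, -⟩ | ⟨hku, -⟩
    · have := (above u).mp (hblock ▸ hgt)
      omega
    all_goals omega

theorem lapMatrix_mulVec_comp_clampToBlock (htn : 0 < tn) {q : ℕ} (hq : q < c) (f : ℕ → ℝ)
    (hf : ∑ u ∈ barbellBlock c tn q, f u = 0) (k : Fin (c * tn)) :
    ((cBarbell c tn).lapMatrix ℝ *ᵥ fun u => f (clampToBlock tn q u)) k =
      if k.val / tn = q then tn * f k else 0 := by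
  rw [SimpleGraph.lapMatrix_mulVec_apply_eq_sum_sub]
  split_ifs with hk
  · have hterm : ∀ u ∈ (cBarbell c tn).neighborFinset k,
        f (clampToBlock tn q k) - f (clampToBlock tn q u) =
          if u ∈ barbellBlock c tn q then f k - f u else 0 := by
      intro u hu
      rw [SimpleGraph.mem_neighborFinset] at hu
      rw [clampToBlock_of_div_eq htn hk]
      split_ifs with hub
      · rw [clampToBlock_of_div_eq htn (by simpa [barbellBlock] using hub)]
      · rw [clampToBlock_eq_of_adj htn hu.symm (by simpa [barbellBlock] using hub),
          clampToBlock_of_div_eq htn hk, sub_self]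
    have hfilter : ((cBarbell c tn).neighborFinset k).filter (· ∈ barbellBlock c tn q) =
        (barbellBlock c tn q).erase k := by
      ext u
      simp only [mem_filter, SimpleGraph.mem_neighborFinset, mem_erase, barbellBlock, mem_univ,
        true_and]
      exact ⟨fun ⟨h, hu⟩ => ⟨h.ne.symm, hu⟩,
        fun ⟨hu, hu'⟩ => ⟨⟨hu.symm, Or.inl (hk.trans hu'.symm)⟩, hu'⟩⟩
    rw [sum_congr rfl hterm, ← sum_filter, hfilter, sum_erase _ (sub_self _), sum_sub_distrib,
      sum_const, card_barbellBlock htn hq, hf, nsmul_eq_mul, sub_zero]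
  · exact sum_eq_zero fun u hu => by
      rw [clampToBlock_eq_of_adj htn ((SimpleGraph.mem_neighborFinset _ _ _).mp hu) hk, sub_self]

theorem resistance_of_bridge {i j : Fin (c * tn)} (hij : j.val = i.val + 1)
    (hmod : (i.val + 1) % tn = 0) {v : Fin (c * tn) → ℝ}
    (hv : (cBarbell c tn).lapMatrix ℝ *ᵥ v = stdBasisVec i - stdBasisVec j) :
    v i - v j = 1 := by
  rw [SimpleGraph.sub_eq_sub_of_lapMatrix_mulVec_eq _
    (hv.trans (lapMatrix_mulVec_indicator_le_of_bridge hij hmod).symm)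
    (adj_of_bridge hij hmod)]
  simp [hij]

theorem resistance_of_adj_of_div_eq (htn : 0 < tn) {i j : Fin (c * tn)}
    (h : (cBarbell c tn).Adj i j) (hq : i.val / tn = j.val / tn) {v : Fin (c * tn) → ℝ}
    (hv : (cBarbell c tn).lapMatrix ℝ *ᵥ v = stdBasisVec i - stdBasisVec j) :
    v i - v j = 2 / tn := by
  set f : ℕ → ℝ := fun m => ((if m = i.val then 1 else 0) - if m = j.val then 1 else 0) / tn
  have hi : i ∈ barbellBlock c tn (i.val / tn) := by simp [barbellBlock]
  have hj : j ∈ barbellBlock c tn (i.val / tn) := by simp [barbellBlock, hq]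
  have hf : ∑ u ∈ barbellBlock c tn (i.val / tn), f u = 0 := by
    simp [f, ← sum_div, sum_sub_distrib, Fin.val_inj, hi, hj]
  have hpot : (cBarbell c tn).lapMatrix ℝ *ᵥ (fun u => f (clampToBlock tn (i.val / tn) u)) =
      stdBasisVec i - stdBasisVec j := by
    funext k
    rw [lapMatrix_mulVec_comp_clampToBlock htn ((Nat.div_lt_iff_lt_mul htn).mpr i.isLt) f hf k]
    split_ifs with hk
    · simp only [Fin.val_inj, Pi.sub_apply, stdBasisVec, f]
      field_simp
    · have hki : k ≠ i := fun h => hk (by rw [h])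
      have hkj : k ≠ j := fun h => hk (by rw [h, hq])
      simp [stdBasisVec, hki, hkj]
  rw [SimpleGraph.sub_eq_sub_of_lapMatrix_mulVec_eq _ (hv.trans hpot.symm) h,
    clampToBlock_of_div_eq htn rfl, clampToBlock_of_div_eq htn hq.symm]
  simp only [f, ↓reduceIte, Fin.val_inj, h.ne, h.ne.symm]
  ring

end cBarbell

/-- Entries of the uniform-gossiping and effective-resistance gossiping matrices of the
`c`-barbell graph on the edges of the graph. -/
theorem stmt13 (c tn : ℕ) (hc : 2 ≤ c) (htn : 3 ≤ tn)
    -- the effective resistances, characterized via the Laplacian: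
    (R : Fin (c * tn) → Fin (c * tn) → ℝ)
    (hR : ∀ i j, (cBarbell c tn).Adj i j →
      ∃ v : Fin (c * tn) → ℝ,
        (cBarbell c tn).lapMatrix ℝ *ᵥ v = stdBasisVec i - stdBasisVec j ∧
        R i j = v i - v j)
    -- the effective-resistance gossiping matrix `W̄_{P^r} = I − D^r/2 + P^r`:
    (Pr Dr Wr : Matrix (Fin (c * tn)) (Fin (c * tn)) ℝ)
    (hPr : Pr = Matrix.of fun i j =>
      if (cBarbell c tn).Adj i j then R i j / (2 * ((c : ℝ) * (tn : ℝ) - 1)) else 0)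
    (hDr : Dr = Matrix.diagonal fun i =>
      (∑ j ∈ (cBarbell c tn).neighborFinset i, R i j) / ((c : ℝ) * (tn : ℝ) - 1))
    (hWr : Wr = (1 : Matrix (Fin (c * tn)) (Fin (c * tn)) ℝ) - (1 / 2 : ℝ) • Dr + Pr) :
    -- (a) bridge-edge entries of `W̄_{P^u}`
    (∀ i j : Fin (c * tn), j.val = i.val + 1 → (i.val + 1) % tn = 0 →
      gossipUnif (cBarbell c tn) i j = 1 / ((c : ℝ) * (tn : ℝ) ^ 2)) ∧
    -- (b) within-block edges incident to a bridge endpoint (degrees `tn` and `tn−1`)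
    (∀ i j : Fin (c * tn), (cBarbell c tn).Adj i j → i.val / tn = j.val / tn →
      (cBarbell c tn).degree i = tn → (cBarbell c tn).degree j = tn - 1 →
      gossipUnif (cBarbell c tn) i j =
        (2 * (tn : ℝ) - 1) / (2 * (c : ℝ) * (tn : ℝ) ^ 2 * ((tn : ℝ) - 1))) ∧
    -- (c) within-block edges between two vertices of degree `tn−1`
    (∀ i j : Fin (c * tn), (cBarbell c tn).Adj i j → i.val / tn = j.val / tn →
      (cBarbell c tn).degree i = tn - 1 → (cBarbell c tn).degree j = tn - 1 →
      gossipUnif (cBarbell c tn) i j = 1 / ((c : ℝ) * (tn : ℝ) * ((tn : ℝ) - 1))) ∧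
    -- bridge-edge entries of `W̄_{P^r}`
    (∀ i j : Fin (c * tn), j.val = i.val + 1 → (i.val + 1) % tn = 0 →
      Wr i j = 1 / (2 * ((c : ℝ) * (tn : ℝ) - 1))) ∧
    -- within-block entries of `W̄_{P^r}`
    (∀ i j : Fin (c * tn), (cBarbell c tn).Adj i j → i.val / tn = j.val / tn →
      Wr i j = 1 / ((tn : ℝ) * ((c : ℝ) * (tn : ℝ) - 1))) := by
  have hcR : (2 : ℝ) ≤ c := by exact_mod_cast hc
  have htnR : (3 : ℝ) ≤ tn := by exact_mod_cast htn
  have htn1 : (tn : ℝ) - 1 ≠ 0 := by linarith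
  have hn1 : (c : ℝ) * tn - 1 ≠ 0 := by nlinarith
  have hWr_apply : ∀ i j, (cBarbell c tn).Adj i j → Wr i j = R i j / (2 * (c * tn - 1)) :=
    fun i j h => by simp [hWr, hDr, hPr, h.ne, h]
  refine ⟨fun i j hij hmod => ?_, fun i j h _ hdi hdj => ?_, fun i j h _ hdi hdj => ?_,
    fun i j hij hmod => ?_, fun i j h hq => ?_⟩
  · have h := cBarbell.adj_of_bridge hij hmod
    have hq : i.val / tn ≠ j.val / tn := by
      rw [hij, Nat.succ_div_of_dvd (Nat.dvd_of_mod_eq_zero hmod)]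
      omega
    rw [gossipUnif_apply_of_adj _ h, cBarbell.degree_eq_of_adj_of_div_ne (by omega) h hq,
      cBarbell.degree_eq_of_adj_of_div_ne (by omega) h.symm hq.symm, Nat.cast_mul]
    field_simp
    ring
  · rw [gossipUnif_apply_of_adj _ h, hdi, hdj, Nat.cast_mul, Nat.cast_sub (by omega),
      Nat.cast_one]
    field_simp
    ring
  · rw [gossipUnif_apply_of_adj _ h, hdi, hdj, Nat.cast_mul, Nat.cast_sub (by omega),
      Nat.cast_one]
    field_simp
    ring
  · obtain ⟨v, hv, hRv⟩ := hR i j (cBarbell.adj_of_bridge hij hmod)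
    rw [hWr_apply i j (cBarbell.adj_of_bridge hij hmod), hRv,
      cBarbell.resistance_of_bridge hij hmod hv]
  · obtain ⟨v, hv, hRv⟩ := hR i j h
    rw [hWr_apply i j h, hRv, cBarbell.resistance_of_adj_of_div_eq (by omega) h hq hv]
    field_simp
end

section
/- Let G be a connected simple graph on n ≥ 2 vertices with diameter 𝒟 (the maximum over pairs of vertices of the graph distance), and let W̄_{P^r} be its effective-resistance gossiping matrix. Then the second largest eigenvalue of W̄_{P^r} satisfies λ_{n−1}(W̄_{P^r}) ≤ 1 − 1/(6·𝒟·n³). -/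
/-!
The effective resistance of an edge is at least `2/n`, by Cauchy–Schwarz for the Laplacian form
applied to `e_i - e_j` and a potential `v` with `L v = e_i - e_j`. The gossiping matrix is
`I - L_R / (2(n-1))` for the Laplacian `L_R` weighted by the resistances, so its quadratic form is
`‖x‖² - Σ_{i∼j} R_ij (x_i - x_j)² / (4(n-1))`. For `x` orthogonal to the all-ones vector, the
largest and smallest entries have opposite signs and are joined by a path of length at most `𝒟`,
which gives `‖x‖² ≤ n 𝒟 Σ_{i∼j} (x_i - x_j)²`; hence the form is at most `(1 - 1/(6𝒟n³)) ‖x‖²`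
on that hyperplane. The hyperplane meets the span of any two orthonormal eigenvectors, so at most
one eigenvalue exceeds this bound.
-/

open Matrix BigOperators Finset

lemma stdBasisVec_eq_single {n : ℕ} (i : Fin n) : stdBasisVec i = Pi.single i 1 := by
  ext k
  simp [stdBasisVec, Pi.single_apply]

namespace SimpleGraph

lemma Walk.sub_eq_sum_darts {V : Type*} {G : SimpleGraph V} {a b : V} (p : G.Walk a b)
    (y : V → ℝ) : y a - y b = (p.darts.map fun d => y d.fst - y d.snd).sum := by
  induction p with
  | nil => simp
  | cons h q ih => simp [← ih]

variable {V : Type*} [Fintype V] [DecidableEq V] (G : SimpleGraph V) [DecidableRel G.Adj]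

lemma single_sub_single_dotProduct (i j : V) (w : V → ℝ) :
    (Pi.single i 1 - Pi.single j 1) ⬝ᵥ w = w i - w j := by
  simp [sub_dotProduct]

lemma sq_dotProduct_lapMatrix_mulVec_le (x y : V → ℝ) :
    (x ⬝ᵥ (G.lapMatrix ℝ *ᵥ y)) ^ 2 ≤
      (x ⬝ᵥ (G.lapMatrix ℝ *ᵥ x)) * (y ⬝ᵥ (G.lapMatrix ℝ *ᵥ y)) := by
  have hsymm : LinearMap.IsSymm (toBilin' (G.lapMatrix ℝ)) :=
    LinearMap.BilinForm.isSymm_iff.mp (isSymm_toBilin'_iff_isSymm.mpr (G.isSymm_lapMatrix ℝ))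
  have hnonneg (z : V → ℝ) : 0 ≤ toBilin' (G.lapMatrix ℝ) z z := by
    simpa [toBilin'_apply'] using (G.posSemidef_lapMatrix ℝ).dotProduct_mulVec_nonneg z
  simpa only [toBilin'_apply'] using
    (toBilin' (G.lapMatrix ℝ)).apply_sq_le_of_symm hnonneg hsymm x y

lemma single_sub_single_dotProduct_lapMatrix_mulVec {i j : V} (hij : G.Adj i j) :
    (Pi.single i 1 - Pi.single j 1) ⬝ᵥ
        (G.lapMatrix ℝ *ᵥ (Pi.single i 1 - Pi.single j 1)) = G.degree i + G.degree j + 2 := by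
  rw [single_sub_single_dotProduct, lapMatrix_mulVec_apply, lapMatrix_mulVec_apply]
  simp only [Pi.sub_apply, Pi.single_apply, sum_sub_distrib, sum_ite_eq', mem_neighborFinset,
    SimpleGraph.irrefl, hij, hij.symm, hij.ne, hij.ne.symm, ↓reduceIte]
  ring

lemma two_div_card_le_of_lapMatrix_mulVec_eq {i j : V} (hij : G.Adj i j) {v : V → ℝ}
    (hv : G.lapMatrix ℝ *ᵥ v = Pi.single i 1 - Pi.single j 1) :
    2 / Fintype.card V ≤ v i - v j := by
  set e : V → ℝ := Pi.single i 1 - Pi.single j 1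
  have hev : e ⬝ᵥ (G.lapMatrix ℝ *ᵥ v) = 2 := by
    rw [hv, single_sub_single_dotProduct]
    norm_num [e, hij.ne, hij.ne.symm]
  have hvv : v ⬝ᵥ (G.lapMatrix ℝ *ᵥ v) = v i - v j := by
    rw [hv, dotProduct_comm, single_sub_single_dotProduct]
  have hdeg (k : V) : (G.degree k : ℝ) + 1 ≤ Fintype.card V := by
    exact_mod_cast G.degree_lt_card_verts k
  have hcs := G.sq_dotProduct_lapMatrix_mulVec_le e v
  rw [hev, hvv, G.single_sub_single_dotProduct_lapMatrix_mulVec hij] at hcs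
  have hr : 0 ≤ v i - v j := hvv ▸ (G.posSemidef_lapMatrix ℝ).dotProduct_mulVec_nonneg v
  have hn : (0 : ℝ) < Fintype.card V := by exact_mod_cast Fintype.card_pos_iff.mpr ⟨i⟩
  rw [div_le_iff₀ hn]
  nlinarith [hdeg i, hdeg j]

lemma sub_eq_sub_of_lapMatrix_mulVec_add_eq_zero (hG : G.Preconnected) {v w : V → ℝ}
    (h : G.lapMatrix ℝ *ᵥ v + G.lapMatrix ℝ *ᵥ w = 0) (i j : V) : v i - v j = w j - w i := by
  rw [← mulVec_add, lapMatrix_mulVec_eq_zero_iff_forall_reachable] at h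
  have := h i j (hG i j)
  simp only [Pi.add_apply] at this
  linarith

lemma sq_sub_le_length_mul_sum_adj {a b : V} {p : G.Walk a b} (hp : p.IsPath) (y : V → ℝ) :
    (y a - y b) ^ 2 ≤ p.length * ∑ i, ∑ j, if G.Adj i j then (y i - y j) ^ 2 else 0 := by
  set f : V × V → ℝ := fun e => if G.Adj e.1 e.2 then (y e.1 - y e.2) ^ 2 else 0
  have hnodup : (p.darts.map Dart.toProd).Nodup :=
    (Walk.darts_nodup_of_support_nodup hp.support_nodup).map Dart.toProd_injective
  set s := (p.darts.map Dart.toProd).toFinset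
  have hcard : #s = p.length := by
    rw [List.toFinset_card_of_nodup hnodup, List.length_map, Walk.length_darts]
  have hsum : y a - y b = ∑ e ∈ s, (y e.1 - y e.2) := by
    rw [List.sum_toFinset _ hnodup, List.map_map, p.sub_eq_sum_darts y]
    rfl
  have hadj : ∀ e ∈ s, G.Adj e.1 e.2 := by
    simp only [s, List.mem_toFinset, List.mem_map]
    rintro _ ⟨d, -, rfl⟩
    exact d.adj
  calc (y a - y b) ^ 2 ≤ #s * ∑ e ∈ s, (y e.1 - y e.2) ^ 2 := hsum ▸ sq_sum_le_card_mul_sum_sq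
    _ = p.length * ∑ e ∈ s, f e := by
        rw [hcard, sum_congr rfl fun e he => if_pos (hadj e he)]
    _ ≤ p.length * ∑ e, f e := by
        gcongr ?_ * ?_
        exact sum_le_sum_of_subset_of_nonneg (subset_univ _)
          fun e _ _ => by simp only [f]; split_ifs <;> positivity
    _ = _ := by rw [Fintype.sum_prod_type]

lemma dotProduct_self_le_of_sum_eq_zero (hG : G.Connected) {D : ℕ} (hD : ∀ u v, G.dist u v ≤ D)
    {x : V → ℝ} (hx : ∑ k, x k = 0) :
    x ⬝ᵥ x ≤ Fintype.card V * D * ∑ i, ∑ j, if G.Adj i j then (x i - x j) ^ 2 else 0 := by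
  have hV : (univ : Finset V).Nonempty := univ_nonempty_iff.mpr hG.nonempty
  obtain ⟨a, -, ha⟩ := exists_max_image univ x hV
  obtain ⟨b, -, hb⟩ := exists_min_image univ x hV
  obtain ⟨k, -, hk⟩ := exists_le_of_sum_le hV (f := fun _ => (0 : ℝ)) (g := x) (by simp [hx])
  obtain ⟨l, -, hl⟩ := exists_le_of_sum_le hV (f := x) (g := fun _ => (0 : ℝ)) (by simp [hx])
  have hxa : 0 ≤ x a := hk.trans (ha k (mem_univ k))
  have hxb : x b ≤ 0 := (hb l (mem_univ l)).trans hl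
  obtain ⟨p, hp, hlen⟩ := hG.exists_path_of_dist a b
  calc x ⬝ᵥ x = ∑ k, x k ^ 2 := by simp [dotProduct, sq]
    _ ≤ ∑ _k : V, (x a - x b) ^ 2 := sum_le_sum fun k _ => by
        nlinarith [ha k (mem_univ k), hb k (mem_univ k)]
    _ = Fintype.card V * (x a - x b) ^ 2 := by simp
    _ ≤ Fintype.card V * (D * ∑ i, ∑ j, if G.Adj i j then (x i - x j) ^ 2 else 0) := by
        gcongr
        refine (G.sq_sub_le_length_mul_sum_adj hp x).trans ?_
        gcongr
        exact_mod_cast hlen ▸ hD a b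
    _ = _ := by ring

def weightedLapMatrix (w : V → V → ℝ) : Matrix V V ℝ :=
  diagonal (fun i => ∑ j ∈ G.neighborFinset i, w i j) - of fun i j => if G.Adj i j then w i j else 0

lemma one_sub_smul_weightedLapMatrix (w : V → V → ℝ) {c : ℝ} (hc : c ≠ 0) :
    1 - (1 / (2 * c)) • G.weightedLapMatrix w =
      1 - (1 / 2 : ℝ) • diagonal (fun i => (∑ j ∈ G.neighborFinset i, w i j) / c) +
        of fun i j => if G.Adj i j then w i j / (2 * c) else 0 := by
  ext i j
  simp only [weightedLapMatrix, Matrix.sub_apply, Matrix.add_apply, Matrix.smul_apply, one_apply,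
    diagonal_apply, of_apply, smul_eq_mul]
  split_ifs <;> field_simp <;> ring

variable {G} {w : V → V → ℝ}

lemma isSymm_weightedLapMatrix (hw : ∀ i j, G.Adj i j → w i j = w j i) :
    (G.weightedLapMatrix w).IsSymm := by
  refine IsSymm.ext fun i j => ?_
  obtain rfl | hne := eq_or_ne i j
  · rfl
  by_cases hij : G.Adj i j
  · simp [weightedLapMatrix, hne, hne.symm, hij, hij.symm, hw i j hij]
  · have hji : ¬ G.Adj j i := fun h => hij h.symm
    simp [weightedLapMatrix, hne, hne.symm, hij, hji]

lemma dotProduct_weightedLapMatrix_mulVec (hw : ∀ i j, G.Adj i j → w i j = w j i) (x : V → ℝ) :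
    x ⬝ᵥ (G.weightedLapMatrix w *ᵥ x) =
      (∑ i, ∑ j, if G.Adj i j then w i j * (x i - x j) ^ 2 else 0) / 2 := by
  set g : V → V → ℝ := fun i j => if G.Adj i j then w i j * (x i * x i - x i * x j) else 0
  have hform : x ⬝ᵥ (G.weightedLapMatrix w *ᵥ x) = ∑ i, ∑ j, g i j := by
    rw [weightedLapMatrix, sub_mulVec, dotProduct_sub, dotProduct, dotProduct, ← sum_sub_distrib]
    refine sum_congr rfl fun i _ => ?_
    simp only [mulVec_diagonal]
    simp only [mulVec, dotProduct, of_apply, neighborFinset_eq_filter, sum_filter, sum_mul,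
      mul_sum, ← sum_sub_distrib]
    refine sum_congr rfl fun j _ => ?_
    simp only [g]
    split_ifs <;> ring
  have hsymm (i j : V) :
      (if G.Adj i j then w i j * (x i - x j) ^ 2 else 0) = g i j + g j i := by
    by_cases hij : G.Adj i j
    · simp only [g, if_pos hij, if_pos hij.symm, hw i j hij]
      ring
    · have hji : ¬ G.Adj j i := fun h => hij h.symm
      simp [g, hij, hji]
  simp_rw [hform, hsymm, sum_add_distrib]
  rw [sum_comm (f := fun i j => g j i)]
  ring

lemma two_mul_dotProduct_self_le_of_sum_eq_zero (hG : G.Connected) {D : ℕ}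
    (hD : ∀ u v, G.dist u v ≤ D) (hw : ∀ i j, G.Adj i j → 2 / Fintype.card V ≤ w i j)
    {x : V → ℝ} (hx : ∑ k, x k = 0) :
    2 * (x ⬝ᵥ x) ≤
      Fintype.card V ^ 2 * D * ∑ i, ∑ j, if G.Adj i j then w i j * (x i - x j) ^ 2 else 0 := by
  have hn : (0 : ℝ) < Fintype.card V := by
    have := hG.nonempty
    exact_mod_cast Fintype.card_pos
  have hS : 2 * ∑ i, ∑ j, (if G.Adj i j then (x i - x j) ^ 2 else 0) ≤
      Fintype.card V * ∑ i, ∑ j, if G.Adj i j then w i j * (x i - x j) ^ 2 else 0 := by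
    simp only [mul_sum]
    refine sum_le_sum fun i _ => sum_le_sum fun j _ => ?_
    split_ifs with hij
    · have := (div_le_iff₀' hn).mp (hw i j hij)
      nlinarith [sq_nonneg (x i - x j)]
    · simp
  calc 2 * (x ⬝ᵥ x)
      ≤ 2 * (Fintype.card V * D * ∑ i, ∑ j, if G.Adj i j then (x i - x j) ^ 2 else 0) := by
        gcongr
        exact G.dotProduct_self_le_of_sum_eq_zero hG hD hx
    _ = Fintype.card V * D * (2 * ∑ i, ∑ j, if G.Adj i j then (x i - x j) ^ 2 else 0) := by ring
    _ ≤ Fintype.card V * D *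
          (Fintype.card V * ∑ i, ∑ j, if G.Adj i j then w i j * (x i - x j) ^ 2 else 0) := by
        gcongr
    _ = _ := by ring

lemma dotProduct_one_sub_smul_weightedLapMatrix_mulVec_le (hG : G.Connected)
    (hV : 2 ≤ Fintype.card V) {D : ℕ} (hdist : ∀ u v, G.dist u v ≤ D)
    (hw_symm : ∀ i j, G.Adj i j → w i j = w j i)
    (hw : ∀ i j, G.Adj i j → 2 / Fintype.card V ≤ w i j) {x : V → ℝ} (hx : ∑ k, x k = 0) :
    x ⬝ᵥ ((1 - (1 / (2 * ((Fintype.card V : ℝ) - 1))) • G.weightedLapMatrix w) *ᵥ x) ≤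
      (1 - 1 / (6 * D * Fintype.card V ^ 3)) * (x ⬝ᵥ x) := by
  have hD : (0 : ℝ) < D := by
    obtain ⟨a, b, hab⟩ := Fintype.exists_pair_of_one_lt_card hV
    exact_mod_cast (hG.pos_dist_of_ne hab).trans_le (hdist a b)
  have hn : (2 : ℝ) ≤ Fintype.card V := by exact_mod_cast hV
  have hPoincare := two_mul_dotProduct_self_le_of_sum_eq_zero hG hdist hw hx
  rw [sub_mulVec, one_mulVec, smul_mulVec, dotProduct_sub, dotProduct_smul, smul_eq_mul,
    dotProduct_weightedLapMatrix_mulVec hw_symm]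
  set Q := ∑ i, ∑ j, if G.Adj i j then w i j * (x i - x j) ^ 2 else 0
  set n : ℝ := (Fintype.card V : ℝ)
  have hxx : 0 ≤ x ⬝ᵥ x := by simpa using dotProduct_star_self_nonneg x
  have hQ : 0 ≤ Q :=
    le_of_mul_le_mul_left (a := n ^ 2 * D) (by linarith) (mul_pos (by positivity) hD)
  have hgap : x ⬝ᵥ x / (6 * D * n ^ 3) ≤ Q / (4 * (n - 1)) := by
    rw [div_le_div_iff₀ (by positivity) (by linarith)]
    nlinarith [mul_le_mul_of_nonneg_left hPoincare (by linarith : (0 : ℝ) ≤ 2 * n),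
      mul_nonneg (mul_nonneg hD.le hQ) (by positivity : (0 : ℝ) ≤ n ^ 3)]
  calc x ⬝ᵥ x - 1 / (2 * (n - 1)) * (Q / 2) = x ⬝ᵥ x - Q / (4 * (n - 1)) := by
        rw [one_div_mul_eq_div, div_div]
        ring_nf
    _ ≤ x ⬝ᵥ x - x ⬝ᵥ x / (6 * D * n ^ 3) := by linarith
    _ = (1 - 1 / (6 * D * n ^ 3)) * (x ⬝ᵥ x) := by ring

end SimpleGraph

section Spectral

open Polynomial

variable {ι : Type*} [Fintype ι]

lemma roots_prod_univ_X_sub_C (μ : ι → ℝ) :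
    (∏ i, (X - C (μ i))).roots = univ.val.map μ := by
  rw [roots_prod _ _ (prod_ne_zero_iff.mpr fun i _ => X_sub_C_ne_zero (μ i))]
  simp

lemma card_filter_lt_eq_of_prod_X_sub_C_eq {μ ν : ι → ℝ}
    (h : ∏ i, (X - C (μ i)) = ∏ i, (X - C (ν i))) (t : ℝ) :
    #{i | t < μ i} = #{i | t < ν i} := by
  have hroots := congrArg roots h
  rw [roots_prod_univ_X_sub_C, roots_prod_univ_X_sub_C] at hroots
  have := congrArg (Multiset.countP (t < ·)) hroots
  rwa [Multiset.countP_map, Multiset.countP_map] at this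

lemma le_of_card_filter_lt_le_one [DecidableEq ι] [Preorder ι] {μ : ι → ℝ} (hμ : Monotone μ)
    {t : ℝ} (h : #{i | t < μ i} ≤ 1) {i j : ι} (hij : i < j) : μ i ≤ t := by
  by_contra! hi
  have hsub : {i, j} ⊆ ({i | t < μ i} : Finset ι) := by
    intro k hk
    rcases mem_insert.mp hk with rfl | hk
    · simpa using hi
    · rw [mem_singleton.mp hk]
      simpa using hi.trans_le (hμ hij.le)
  have := card_le_card hsub
  rw [card_pair hij.ne] at this
  omega

lemma Matrix.IsHermitian.card_filter_lt_eigenvalues_le_one [DecidableEq ι] {A : Matrix ι ι ℝ}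
    (hA : A.IsHermitian) {u : ι → ℝ} {t : ℝ}
    (h : ∀ x, u ⬝ᵥ x = 0 → x ⬝ᵥ (A *ᵥ x) ≤ t * (x ⬝ᵥ x)) :
    #{i | t < hA.eigenvalues i} ≤ 1 := by
  by_contra! hcard
  obtain ⟨a, ha, b, hb, hab⟩ := one_lt_card.mp hcard
  simp only [mem_filter, mem_univ, true_and] at ha hb
  set v : ι → ι → ℝ := fun k => ⇑(hA.eigenvectorBasis k)
  have hv (k : ι) : A *ᵥ v k = hA.eigenvalues k • v k := hA.mulVec_eigenvectorBasis k
  have hdot (k l : ι) : v k ⬝ᵥ v l = if k = l then 1 else 0 := by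
    rw [← orthonormal_iff_ite.mp hA.eigenvectorBasis.orthonormal k l,
      EuclideanSpace.inner_eq_star_dotProduct, dotProduct_comm]
    simp [v]
  by_cases hua : u ⬝ᵥ v a = 0
  · have := h (v a) hua
    simp only [hv, dotProduct_smul, hdot, ↓reduceIte, smul_eq_mul] at this
    linarith
  · set x := (u ⬝ᵥ v b) • v a - (u ⬝ᵥ v a) • v b
    have hux : u ⬝ᵥ x = 0 := by
      simp only [x, dotProduct_sub, dotProduct_smul, smul_eq_mul]
      ring
    have := h x hux
    simp only [x, mulVec_sub, mulVec_smul, hv, dotProduct_sub, sub_dotProduct, dotProduct_smul,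
      smul_dotProduct, hdot, ↓reduceIte, if_neg hab, if_neg hab.symm, smul_eq_mul] at this
    have hpos : 0 < (u ⬝ᵥ v a) ^ 2 := by positivity
    nlinarith [mul_le_mul_of_nonneg_left ha.le (sq_nonneg (u ⬝ᵥ v b)),
      mul_lt_mul_of_pos_left hb hpos]

lemma Matrix.IsHermitian.le_of_forall_dotProduct_mulVec_le [DecidableEq ι] [Preorder ι]
    {A : Matrix ι ι ℝ} (hA : A.IsHermitian) {μ : ι → ℝ} (hμ : Monotone μ)
    (hchar : A.charpoly = ∏ i, (X - C (μ i))) {u : ι → ℝ} {t : ℝ}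
    (h : ∀ x, u ⬝ᵥ x = 0 → x ⬝ᵥ (A *ᵥ x) ≤ t * (x ⬝ᵥ x)) {i j : ι} (hij : i < j) :
    μ i ≤ t := by
  have hcard := hA.card_filter_lt_eigenvalues_le_one h
  have heig : A.charpoly = ∏ i, (X - C (hA.eigenvalues i)) := by
    simpa only [RCLike.ofReal_real_eq_id, id] using hA.charpoly_eq
  rw [← card_filter_lt_eq_of_prod_X_sub_C_eq (hchar.symm.trans heig)] at hcard
  exact le_of_card_filter_lt_le_one hμ hcard hij

end Spectral

/-- For a connected graph `G` on `n ≥ 2` vertices with diameter `𝒟`, the second largest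
eigenvalue of the effective-resistance gossiping matrix `W̄_{P^r} = I − D^r/2 + P^r` satisfies
`λ_{n−1}(W̄_{P^r}) ≤ 1 − 1/(6 𝒟 n³)`. -/
theorem stmt14 (n : ℕ) (hn : 2 ≤ n) (G : SimpleGraph (Fin n)) [DecidableRel G.Adj]
    (hconn : G.Connected)
    -- `diam` is the diameter: the maximum over pairs of vertices of the graph distance
    (diam : ℕ) (hdiam : IsGreatest {d : ℕ | ∃ u v : Fin n, d = G.dist u v} diam)
    -- the effective resistances, characterized via the Laplacian:
    (R : Fin n → Fin n → ℝ)
    (hR : ∀ i j, G.Adj i j →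
      ∃ v : Fin n → ℝ, G.lapMatrix ℝ *ᵥ v = stdBasisVec i - stdBasisVec j ∧
        R i j = v i - v j)
    -- the effective-resistance gossiping matrix `W̄_{P^r} = I − D^r/2 + P^r`:
    (Pr Dr Wr : Matrix (Fin n) (Fin n) ℝ)
    (hPr : Pr = Matrix.of fun i j => if G.Adj i j then R i j / (2 * ((n : ℝ) - 1)) else 0)
    (hDr : Dr = Matrix.diagonal fun i =>
      (∑ j ∈ G.neighborFinset i, R i j) / ((n : ℝ) - 1))
    (hWr : Wr = (1 : Matrix (Fin n) (Fin n) ℝ) - (1 / 2 : ℝ) • Dr + Pr) :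
    ∀ μ : Fin n → ℝ, Monotone μ →
      Wr.charpoly = ∏ i : Fin n, (Polynomial.X - Polynomial.C (μ i)) →
      μ ⟨n - 2, by omega⟩ ≤ 1 - 1 / (6 * (diam : ℝ) * (n : ℝ) ^ 3) := by
  intro μ hμ hchar
  have hres (i j : Fin n) (hij : G.Adj i j) : ∃ v : Fin n → ℝ,
      G.lapMatrix ℝ *ᵥ v = Pi.single i 1 - Pi.single j 1 ∧ R i j = v i - v j := by
    simpa only [stdBasisVec_eq_single] using hR i j hij
  have hR_symm (i j : Fin n) (hij : G.Adj i j) : R i j = R j i := by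
    obtain ⟨v, hv, hRv⟩ := hres i j hij
    obtain ⟨w, hw, hRw⟩ := hres j i hij.symm
    rw [hRv, hRw]
    exact G.sub_eq_sub_of_lapMatrix_mulVec_add_eq_zero hconn.preconnected (by rw [hv, hw]; abel) i j
  have hR_lb (i j : Fin n) (hij : G.Adj i j) : 2 / Fintype.card (Fin n) ≤ R i j := by
    obtain ⟨v, hv, hRv⟩ := hres i j hij
    exact hRv ▸ G.two_div_card_le_of_lapMatrix_mulVec_eq hij hv
  have hn1 : (n : ℝ) - 1 ≠ 0 := sub_ne_zero.mpr (by exact_mod_cast (by omega : n ≠ 1))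
  have hW : Wr = 1 - (1 / (2 * ((n : ℝ) - 1))) • G.weightedLapMatrix R := by
    rw [hWr, hPr, hDr, G.one_sub_smul_weightedLapMatrix R hn1]
  have hWherm : Wr.IsHermitian := by
    rw [hW, isHermitian_iff_isSymm]
    exact isSymm_one.sub ((G.isSymm_weightedLapMatrix hR_symm).smul _)
  refine hWherm.le_of_forall_dotProduct_mulVec_le hμ hchar (u := 1) (fun x hx => ?_)
    (j := ⟨n - 1, by omega⟩) (Fin.mk_lt_mk.mpr (by omega))
  rw [one_dotProduct] at hx
  have := G.dotProduct_one_sub_smul_weightedLapMatrix_mulVec_le hconn (by simpa using hn)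
    (fun u v => hdiam.2 ⟨u, v, rfl⟩) hR_symm hR_lb hx
  rwa [Fintype.card_fin, ← hW] at this
end
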